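/- arXiv:0907.2059 — 3 statements merged into one kernel-verified Lean document; each statement's English description precedes it below -/
import Mathlib

section
/- The reduction relation of the calculus Fx (lambda calculus extended with raise, try, natrec, foldright, and their reduction rules) is confluent: if M →* N and M →* N', then there exists P with N →* P and N' →* P. -/
/-- Exception names (a countable set, taken to be ℕ). -/
abbrev ExnName := ℕ

/-- Terms of the calculus Fx (de Bruijn indices). -/
inductive Tm : Type
  | var : ℕ → Tm
  | lam : Tm → Tm
  | app : Tm → Tm → Tm
  | raise : ExnName → Tm
  | tryc : Tm → ExnName → Tm → Tm
  | zero : Tm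
  | succ : Tm
  | natrec : Tm
  | nil : Tm
  | cons : Tm
  | foldr : Tm
  deriving DecidableEq

namespace Tm

/-- Shifting of de Bruijn indices ≥ k. -/
def lift : ℕ → Tm → Tm
  | k, var i => if i < k then var i else var (i + 1)
  | k, lam M => lam (lift (k + 1) M)
  | k, app M N => app (lift k M) (lift k N)
  | k, tryc M e N => tryc (lift k M) e (lift k N)
  | _, raise e => raise e
  | _, zero => zero
  | _, succ => succ
  | _, natrec => natrec
  | _, nil => nil
  | _, cons => cons
  | _, foldr => foldr

/-- Capture-avoiding substitution `M[k := N]` (de Bruijn). -/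
def subst : ℕ → Tm → Tm → Tm
  | k, N, var i => if i = k then N else if k < i then var (i - 1) else var i
  | k, N, lam M => lam (subst (k + 1) (lift 0 N) M)
  | k, N, app M P => app (subst k N M) (subst k N P)
  | k, N, tryc M e P => tryc (subst k N M) e (subst k N P)
  | _, _, raise e => raise e
  | _, _, zero => zero
  | _, _, succ => succ
  | _, _, natrec => natrec
  | _, _, nil => nil
  | _, _, cons => cons
  | _, _, foldr => foldr

end Tm

open Tm

/-- Regular values of Fx. -/
inductive RegVal : Tm → Prop
  | lam (M) : RegVal (lam M)
  | zero : RegVal zero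
  | succ : RegVal succ
  | succApp (N) : RegVal (app succ N)
  | natrec : RegVal natrec
  | natrec1 (M) : RegVal (app natrec M)
  | natrec2 (M N) : RegVal (app (app natrec M) N)
  | nil : RegVal nil
  | cons : RegVal cons
  | cons1 (M) : RegVal (app cons M)
  | cons2 (M N) : RegVal (app (app cons M) N)
  | foldr : RegVal foldr
  | foldr1 (M) : RegVal (app foldr M)
  | foldr2 (M N) : RegVal (app (app foldr M) N)

/-- The notion of reduction ▷ of Fx. -/
inductive Head : Tm → Tm → Prop
  | beta (M N) : Head (app (lam M) N) (subst 0 N M)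
  | raiseApp (e M) : Head (app (raise e) M) (raise e)
  | tryCatch (e N) : Head (tryc (raise e) e N) N
  | tryOther (e e' N) : e ≠ e' → Head (tryc (raise e') e N) (raise e')
  | tryVal (V e N) : RegVal V → Head (tryc V e N) V
  | recZero (X Y) : Head (app (app (app natrec X) Y) zero) X
  | recSucc (X Y N) :
      Head (app (app (app natrec X) Y) (app succ N))
        (app (app Y N) (app (app (app natrec X) Y) N))
  | recRaise (X Y e) : Head (app (app (app natrec X) Y) (raise e)) (raise e)
  | foldNil (X Y) : Head (app (app (app foldr X) Y) nil) X
  | foldCons (X Y E L) :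
      Head (app (app (app foldr X) Y) (app (app cons E) L))
        (app (app (app Y E) L) (app (app (app foldr X) Y) L))
  | foldRaise (X Y e) : Head (app (app (app foldr X) Y) (raise e)) (raise e)

/-- One-step reduction: compatible closure of ▷. -/
inductive Red : Tm → Tm → Prop
  | head {M N} : Head M N → Red M N
  | appL {M M' N} : Red M M' → Red (app M N) (app M' N)
  | appR {M N N'} : Red N N' → Red (app M N) (app M N')
  | lam {M M'} : Red M M' → Red (lam M) (lam M')
  | tryL {M M' e N} : Red M M' → Red (tryc M e N) (tryc M' e N)
  | tryR {M e N N'} : Red N N' → Red (tryc M e N) (tryc M e N')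

/-- Many-step reduction. -/
abbrev RedStar : Tm → Tm → Prop := Relation.ReflTransGen Red

/-!
Tait–Martin-Löf's method with Takahashi's complete development. Parallel reduction `Par`
contracts any set of redexes visible in a term at once; it contains `Red` and is contained in
`RedStar`, so both have the same reflexive-transitive closure. The complete development `cd M`
contracts every redex of `M`, and every parallel step `M ⇉ N` satisfies `N ⇉ cd M`, so `Par` has
the diamond property.

What makes the triangle go through for Fx is that parallel reduction never destroys a redex:
regular values stay regular values, so `try V with ε ↦ N ▷ V` survives, and the spines
`natrec X Y`, `foldright X Y`, `S N`, `cons E L` only reduce componentwise.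
-/

namespace Tm

theorem lift_lift (M : Tm) {j k : ℕ} (h : j ≤ k) :
    lift j (lift k M) = lift (k + 1) (lift j M) := by
  induction M generalizing j k with
  | var _ =>
    simp only [lift]
    split_ifs <;> simp only [lift] <;> split_ifs <;> first | rfl | omega
  | lam _ ih => simp only [lift, ih (by omega : j + 1 ≤ k + 1)]
  | app _ _ ihM ihN => simp only [lift, ihM h, ihN h]
  | tryc _ _ _ ihM ihN => simp only [lift, ihM h, ihN h]
  | _ => rfl

theorem lift_subst_of_ge (M : Tm) {N : Tm} {j k : ℕ} (h : k ≤ j) :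
    lift j (subst k N M) = subst k (lift j N) (lift (j + 1) M) := by
  induction M generalizing N j k with
  | var _ =>
    simp only [subst, lift]
    split_ifs <;> simp only [subst, lift] <;> split_ifs <;>
      first | rfl | omega | (congr 1; omega)
  | lam _ ih =>
    simp only [subst, lift, ih (by omega : k + 1 ≤ j + 1), lift_lift N (Nat.zero_le j)]
  | app _ _ ihM ihP => simp only [subst, lift, ihM h, ihP h]
  | tryc _ _ _ ihM ihP => simp only [subst, lift, ihM h, ihP h]
  | _ => rfl

theorem lift_subst_of_le (M : Tm) {N : Tm} {j k : ℕ} (h : j ≤ k) :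
    lift j (subst k N M) = subst (k + 1) (lift j N) (lift j M) := by
  induction M generalizing N j k with
  | var _ =>
    simp only [subst, lift]
    split_ifs <;> simp only [subst, lift] <;> split_ifs <;>
      first | rfl | omega | (congr 1; omega)
  | lam _ ih =>
    simp only [subst, lift, ih (by omega : j + 1 ≤ k + 1), lift_lift N (Nat.zero_le j)]
  | app _ _ ihM ihP => simp only [subst, lift, ihM h, ihP h]
  | tryc _ _ _ ihM ihP => simp only [subst, lift, ihM h, ihP h]
  | _ => rfl

theorem subst_lift (M N : Tm) (k : ℕ) : subst k N (lift k M) = M := by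
  induction M generalizing N k with
  | var _ =>
    simp only [lift]
    split_ifs <;> simp only [subst] <;> split_ifs <;> first | rfl | omega
  | lam _ ih => simp only [lift, subst, ih]
  | app _ _ ihM ihP => simp only [lift, subst, ihM, ihP]
  | tryc _ _ _ ihM ihP => simp only [lift, subst, ihM, ihP]
  | _ => rfl

theorem subst_subst (M : Tm) {N P : Tm} {j k : ℕ} (h : j ≤ k) :
    subst k P (subst j N M) = subst j (subst k P N) (subst (k + 1) (lift j P) M) := by
  induction M generalizing N P j k with
  | var _ =>
    simp only [subst]
    split_ifs <;> (try simp only [subst]) <;> (try split_ifs) <;>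
      first | rfl | omega | rw [subst_lift]
  | lam _ ih =>
    simp only [subst, ih (by omega : j + 1 ≤ k + 1), lift_subst_of_le N (Nat.zero_le k),
      lift_lift P (Nat.zero_le j)]
  | app _ _ ihM ihQ => simp only [subst, ihM h, ihQ h]
  | tryc _ _ _ ihM ihQ => simp only [subst, ihM h, ihQ h]
  | _ => rfl

end Tm

theorem RegVal.lift {V : Tm} (hV : RegVal V) (k : ℕ) : RegVal (lift k V) := by
  cases hV <;> constructor

theorem RegVal.subst {V : Tm} (hV : RegVal V) (k : ℕ) (N : Tm) : RegVal (subst k N V) := by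
  cases hV <;> constructor

inductive Par : Tm → Tm → Prop
  | var (i) : Par (var i) (var i)
  | lam {M M'} : Par M M' → Par (lam M) (lam M')
  | app {M M' N N'} : Par M M' → Par N N' → Par (app M N) (app M' N')
  | raise (e) : Par (raise e) (raise e)
  | tryc {M M' N N'} (e) : Par M M' → Par N N' → Par (tryc M e N) (tryc M' e N')
  | zero : Par zero zero
  | succ : Par succ succ
  | natrec : Par natrec natrec
  | nil : Par nil nil
  | cons : Par cons cons
  | foldr : Par foldr foldr
  | beta {M M' N N'} : Par M M' → Par N N' → Par (app (lam M) N) (subst 0 N' M')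
  | raiseApp (e M) : Par (app (raise e) M) (raise e)
  | tryCatch {N N'} (e) : Par N N' → Par (tryc (raise e) e N) N'
  | tryOther (e e' N) : e ≠ e' → Par (tryc (raise e') e N) (raise e')
  | tryVal {V V'} (e N) : RegVal V → Par V V' → Par (tryc V e N) V'
  | recZero {X X'} (Y) : Par X X' → Par (app (app (app natrec X) Y) zero) X'
  | recSucc {X X' Y Y' N N'} : Par X X' → Par Y Y' → Par N N' →
      Par (app (app (app natrec X) Y) (app succ N))
        (app (app Y' N') (app (app (app natrec X') Y') N'))
  | recRaise (X Y e) : Par (app (app (app natrec X) Y) (raise e)) (raise e)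
  | foldNil {X X'} (Y) : Par X X' → Par (app (app (app foldr X) Y) nil) X'
  | foldCons {X X' Y Y' E E' L L'} : Par X X' → Par Y Y' → Par E E' → Par L L' →
      Par (app (app (app foldr X) Y) (app (app cons E) L))
        (app (app (app Y' E') L') (app (app (app foldr X') Y') L'))
  | foldRaise (X Y e) : Par (app (app (app foldr X) Y) (raise e)) (raise e)

namespace Par

theorem refl (M : Tm) : Par M M := by
  induction M <;> constructor <;> assumption

theorem lift {M M'} (h : Par M M') (k : ℕ) : Par (Tm.lift k M) (Tm.lift k M') := by
  induction h generalizing k with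
  | var _ => simp only [Tm.lift]; split_ifs <;> exact .var _
  | beta _ _ ihM ihN =>
    rw [Tm.lift, Tm.lift, lift_subst_of_ge _ (Nat.zero_le k)]
    exact .beta (ihM (k + 1)) (ihN k)
  | lam _ ih => exact .lam (ih (k + 1))
  | app _ _ ihM ihN => exact .app (ihM k) (ihN k)
  | tryc e _ _ ihM ihN => exact .tryc e (ihM k) (ihN k)
  | tryCatch e _ ih => exact .tryCatch e (ih k)
  | tryOther e e' _ hne => exact .tryOther e e' _ hne
  | tryVal e _ hV _ ih => exact .tryVal e _ (hV.lift k) (ih k)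
  | recZero _ _ ih => exact .recZero _ (ih k)
  | recSucc _ _ _ ihX ihY ihN => exact .recSucc (ihX k) (ihY k) (ihN k)
  | foldNil _ _ ih => exact .foldNil _ (ih k)
  | foldCons _ _ _ _ ihX ihY ihE ihL => exact .foldCons (ihX k) (ihY k) (ihE k) (ihL k)
  | raise _ | zero | succ | natrec | nil | cons | foldr | raiseApp _ _ | recRaise _ _ _
    | foldRaise _ _ _ => constructor

theorem subst {M M'} (h : Par M M') {k : ℕ} {N N'} (hN : Par N N') :
    Par (Tm.subst k N M) (Tm.subst k N' M') := by
  induction h generalizing k N N' with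
  | var _ => simp only [Tm.subst]; split_ifs <;> first | exact hN | exact .var _
  | beta _ _ ihM ihN =>
    rw [Tm.subst, Tm.subst, subst_subst _ (Nat.zero_le k)]
    exact .beta (ihM (hN.lift 0)) (ihN hN)
  | lam _ ih => exact .lam (ih (hN.lift 0))
  | app _ _ ihM ihP => exact .app (ihM hN) (ihP hN)
  | tryc e _ _ ihM ihP => exact .tryc e (ihM hN) (ihP hN)
  | tryCatch e _ ih => exact .tryCatch e (ih hN)
  | tryOther e e' _ hne => exact .tryOther e e' _ hne
  | tryVal e _ hV _ ih => exact .tryVal e _ (hV.subst k N) (ih hN)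
  | recZero _ _ ih => exact .recZero _ (ih hN)
  | recSucc _ _ _ ihX ihY ihP => exact .recSucc (ihX hN) (ihY hN) (ihP hN)
  | foldNil _ _ ih => exact .foldNil _ (ih hN)
  | foldCons _ _ _ _ ihX ihY ihE ihL => exact .foldCons (ihX hN) (ihY hN) (ihE hN) (ihL hN)
  | raise _ | zero | succ | natrec | nil | cons | foldr | raiseApp _ _ | recRaise _ _ _
    | foldRaise _ _ _ => constructor

theorem regVal {V V'} (h : Par V V') (hV : RegVal V) : RegVal V' := by
  cases hV <;>
    casesm* Par (Tm.lam _) _, Par Tm.zero _, Par Tm.succ _, Par Tm.natrec _, Par Tm.nil _,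
      Par Tm.cons _, Par Tm.foldr _, Par (Tm.app _ _) _ <;>
    constructor

end Par

def cd : Tm → Tm
  | var i => var i
  | lam M => lam (cd M)
  | raise e => raise e
  | zero => zero
  | succ => succ
  | natrec => natrec
  | nil => nil
  | cons => cons
  | foldr => foldr
  | app (lam M) N => subst 0 (cd N) (cd M)
  | app (raise e) _ => raise e
  | app (app (app natrec X) _) zero => cd X
  | app (app (app natrec X) Y) (app succ N) =>
      app (app (cd Y) (cd N)) (app (app (app natrec (cd X)) (cd Y)) (cd N))
  | app (app (app natrec _) _) (raise e) => raise e
  | app (app (app foldr X) _) nil => cd X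
  | app (app (app foldr X) Y) (app (app cons E) L) =>
      app (app (app (cd Y) (cd E)) (cd L)) (app (app (app foldr (cd X)) (cd Y)) (cd L))
  | app (app (app foldr _) _) (raise e) => raise e
  | app M N => app (cd M) (cd N)
  | tryc (raise e') e N => if e' = e then cd N else raise e'
  | tryc (lam M) _ _ => lam (cd M)
  | tryc zero _ _ => zero
  | tryc succ _ _ => succ
  | tryc (app succ N) _ _ => app succ (cd N)
  | tryc natrec _ _ => natrec
  | tryc (app natrec M) _ _ => app natrec (cd M)
  | tryc (app (app natrec M) N) _ _ => app (app natrec (cd M)) (cd N)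
  | tryc nil _ _ => nil
  | tryc cons _ _ => cons
  | tryc (app cons M) _ _ => app cons (cd M)
  | tryc (app (app cons M) N) _ _ => app (app cons (cd M)) (cd N)
  | tryc foldr _ _ => foldr
  | tryc (app foldr M) _ _ => app foldr (cd M)
  | tryc (app (app foldr M) N) _ _ => app (app foldr (cd M)) (cd N)
  | tryc M e N => tryc (cd M) e (cd N)

theorem cd_tryc_of_regVal {V : Tm} (hV : RegVal V) (e : ExnName) (N : Tm) :
    cd (tryc V e N) = cd V := by
  cases hV <;> rfl

theorem cd_tryc_raise_self (e : ExnName) (N : Tm) : cd (tryc (raise e) e N) = cd N :=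
  if_pos rfl

theorem cd_tryc_raise_of_ne {e e' : ExnName} (h : e' ≠ e) (N : Tm) :
    cd (tryc (raise e') e N) = raise e' :=
  if_neg h

theorem cd_tryc_of_not_regVal {M : Tm} (hV : ¬RegVal M) (hM : ∀ e', M ≠ raise e')
    (e : ExnName) (N : Tm) : cd (tryc M e N) = tryc (cd M) e (cd N) := by
  rcases M with _ | _ | ⟨_ | _ | ⟨_ | _, _⟩, _⟩
  all_goals first | rfl | exact absurd (by constructor) hV | exact absurd rfl (hM _)

theorem par_cd_natrec_app {X Y M' N N'} (hM : Par (app (app natrec X) Y) M')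
    (ihM : Par M' (cd (app (app natrec X) Y))) (hN : Par N N') (ihN : Par N' (cd N)) :
    Par (app M' N') (cd (app (app (app natrec X) Y) N)) := by
  cases hM with | app hS _ => ?_
  cases hS with | app hC _ => ?_
  cases hC
  cases ihM with | app ihS ihY => ?_
  cases ihS with | app _ ihX => ?_
  cases N
  case zero => cases hN; exact .recZero _ ihX
  case raise e => cases hN; exact .recRaise _ _ e
  case app S _ =>
    cases S
    case succ =>
      cases hN with | app hS _ => ?_
      cases hS
      cases ihN with | app _ ihK => exact .recSucc ihX ihY ihK
    all_goals exact .app (.app (.app .natrec ihX) ihY) ihN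
  all_goals exact .app (.app (.app .natrec ihX) ihY) ihN

theorem par_cd_foldr_app {X Y M' N N'} (hM : Par (app (app foldr X) Y) M')
    (ihM : Par M' (cd (app (app foldr X) Y))) (hN : Par N N') (ihN : Par N' (cd N)) :
    Par (app M' N') (cd (app (app (app foldr X) Y) N)) := by
  cases hM with | app hS _ => ?_
  cases hS with | app hC _ => ?_
  cases hC
  cases ihM with | app ihS ihY => ?_
  cases ihS with | app _ ihX => ?_
  cases N
  case nil => cases hN; exact .foldNil _ ihX
  case raise e => cases hN; exact .foldRaise _ _ e
  case app S _ =>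
    cases S
    case app C _ =>
      cases C
      case cons =>
        cases hN with | app hS _ => ?_
        cases hS with | app hC _ => ?_
        cases hC
        cases ihN with | app ihS ihL => ?_
        cases ihS with | app _ ihE => exact .foldCons ihX ihY ihE ihL
      all_goals exact .app (.app (.app .foldr ihX) ihY) ihN
    all_goals exact .app (.app (.app .foldr ihX) ihY) ihN
  all_goals exact .app (.app (.app .foldr ihX) ihY) ihN

theorem par_cd_app {M M' N N'} (hM : Par M M') (ihM : Par M' (cd M)) (hN : Par N N')
    (ihN : Par N' (cd N)) : Par (app M' N') (cd (app M N)) := by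
  cases M
  case lam =>
    cases hM with | lam _ => ?_
    cases ihM with | lam ihB => exact .beta ihB ihN
  case raise e => cases hM; exact .raiseApp e N'
  case app S _ =>
    cases S
    case app C _ =>
      cases C
      case natrec => exact par_cd_natrec_app hM ihM hN ihN
      case foldr => exact par_cd_foldr_app hM ihM hN ihN
      all_goals exact .app ihM ihN
    all_goals exact .app ihM ihN
  all_goals exact .app ihM ihN

theorem par_cd_tryc {M M' N N' e} (hM : Par M M') (ihM : Par M' (cd M)) (ihN : Par N' (cd N)) :
    Par (tryc M' e N') (cd (tryc M e N)) := by
  by_cases hV : RegVal M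
  · rw [cd_tryc_of_regVal hV]
    exact .tryVal e _ (hM.regVal hV) ihM
  obtain ⟨e', rfl⟩ | hraise := em (∃ e', M = raise e')
  · cases hM
    by_cases he : e' = e
    · subst he
      rw [cd_tryc_raise_self]
      exact .tryCatch e' ihN
    · rw [cd_tryc_raise_of_ne he]
      exact .tryOther e e' N' (Ne.symm he)
  · rw [cd_tryc_of_not_regVal hV (not_exists.mp hraise)]
    exact .tryc e ihM ihN

theorem par_cd_of_par {M N : Tm} (h : Par M N) : Par N (cd M) := by
  induction h with
  | app hM hN ihM ihN => exact par_cd_app hM ihM hN ihN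
  | tryc _ hM _ ihM ihN => exact par_cd_tryc hM ihM ihN
  | lam _ ih => exact .lam ih
  | beta _ _ ihM ihN => exact ihM.subst ihN
  | tryCatch _ _ ih => rw [cd_tryc_raise_self]; exact ih
  | tryOther _ e' _ hne => rw [cd_tryc_raise_of_ne hne.symm]; exact .raise e'
  | tryVal _ _ hV _ ih => rw [cd_tryc_of_regVal hV]; exact ih
  | recZero _ _ ih | foldNil _ _ ih => exact ih
  | recSucc _ _ _ ihX ihY ihN => exact .app (.app ihY ihN) (.app (.app (.app .natrec ihX) ihY) ihN)
  | foldCons _ _ _ _ ihX ihY ihE ihL =>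
    exact .app (.app (.app ihY ihE) ihL) (.app (.app (.app .foldr ihX) ihY) ihL)
  | var _ | raise _ | zero | succ | natrec | nil | cons | foldr | raiseApp _ _ | recRaise _ _ _
    | foldRaise _ _ _ => constructor

theorem Head.par {M N : Tm} (h : Head M N) : Par M N := by
  cases h with
  | beta => exact .beta (.refl _) (.refl _)
  | raiseApp => exact .raiseApp _ _
  | tryCatch => exact .tryCatch _ (.refl _)
  | tryOther _ _ _ hne => exact .tryOther _ _ _ hne
  | tryVal _ _ _ hV => exact .tryVal _ _ hV (.refl _)
  | recZero => exact .recZero _ (.refl _)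
  | recSucc => exact .recSucc (.refl _) (.refl _) (.refl _)
  | recRaise => exact .recRaise _ _ _
  | foldNil => exact .foldNil _ (.refl _)
  | foldCons => exact .foldCons (.refl _) (.refl _) (.refl _) (.refl _)
  | foldRaise => exact .foldRaise _ _ _

theorem Red.par {M N : Tm} (h : Red M N) : Par M N := by
  induction h with
  | head h => exact h.par
  | appL _ ih => exact .app ih (.refl _)
  | appR _ ih => exact .app (.refl _) ih
  | lam _ ih => exact .lam ih
  | tryL _ ih => exact .tryc _ ih (.refl _)
  | tryR _ ih => exact .tryc _ (.refl _) ih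

theorem redStar_lam {M M' : Tm} (h : RedStar M M') : RedStar (lam M) (lam M') :=
  h.lift lam fun _ _ => Red.lam

theorem redStar_app {M M' N N' : Tm} (hM : RedStar M M') (hN : RedStar N N') :
    RedStar (app M N) (app M' N') :=
  (hM.lift (app · N) fun _ _ => Red.appL).trans (hN.lift (app M') fun _ _ => Red.appR)

theorem redStar_tryc {M M' N N' : Tm} (e : ExnName) (hM : RedStar M M') (hN : RedStar N N') :
    RedStar (tryc M e N) (tryc M' e N') :=
  (hM.lift (tryc · e N) fun _ _ => Red.tryL).trans (hN.lift (tryc M' e) fun _ _ => Red.tryR)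

theorem Par.redStar {M N : Tm} (h : Par M N) : RedStar M N := by
  have step {M N : Tm} (h : Head M N) : RedStar M N := .single (.head h)
  induction h with
  | lam _ ih => exact redStar_lam ih
  | app _ _ ihM ihN => exact redStar_app ihM ihN
  | tryc e _ _ ihM ihN => exact redStar_tryc e ihM ihN
  | beta _ _ ihM ihN => exact (redStar_app (redStar_lam ihM) ihN).tail (.head (.beta _ _))
  | tryCatch e _ ih => exact (step (.tryCatch e _)).trans ih
  | tryVal e N hV _ ih => exact (step (.tryVal _ e N hV)).trans ih
  | recZero _ _ ih => exact (step (.recZero _ _)).trans ih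
  | foldNil _ _ ih => exact (step (.foldNil _ _)).trans ih
  | recSucc _ _ _ ihX ihY ihN =>
    exact (redStar_app (redStar_app (redStar_app .refl ihX) ihY) (redStar_app .refl ihN)).tail
      (.head (.recSucc _ _ _))
  | foldCons _ _ _ _ ihX ihY ihE ihL =>
    exact (redStar_app (redStar_app (redStar_app .refl ihX) ihY)
      (redStar_app (redStar_app .refl ihE) ihL)).tail (.head (.foldCons _ _ _ _))
  | raiseApp e M => exact step (.raiseApp e M)
  | tryOther e e' N hne => exact step (.tryOther e e' N hne)
  | recRaise X Y e => exact step (.recRaise X Y e)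
  | foldRaise X Y e => exact step (.foldRaise X Y e)
  | var _ | raise _ | zero | succ | natrec | nil | cons | foldr => exact .refl

theorem reflTransGen_par_eq_redStar : Relation.ReflTransGen Par = RedStar :=
  le_antisymm (Relation.reflTransGen_closed fun _ _ => Par.redStar)
    (Relation.ReflTransGen.mono fun _ _ => Red.par)

theorem fx_confluence (M N N' : Tm) (h1 : RedStar M N) (h2 : RedStar M N') :
    ∃ P, RedStar N P ∧ RedStar N' P := by
  rw [← reflTransGen_par_eq_redStar] at h1 h2 ⊢
  exact Relation.church_rosser
    (fun M _ _ h h' => ⟨cd M, .single (par_cd_of_par h), .single (par_cd_of_par h')⟩) h1 h2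
end

section
/- Inversion of application typing in Fx: if Γ ⊢ M N : A, then there exists a type C such that Γ ⊢ M : C → A and Γ ⊢ N : C. -/
open Tm

/-- Types of Fx (de Bruijn type variables); `union A Δ` is `A∪{Δ}`,
`corrupt Δ A` is the corruption `{Δ}A`. -/
inductive Ty : Type
  | tvar : ℕ → Ty
  | nat : Ty
  | list : Ty → Ty
  | arrow : Ty → Ty → Ty
  | all : Ty → Ty
  | union : Ty → Finset ExnName → Ty
  | corrupt : Finset ExnName → Ty → Ty
  deriving DecidableEq

namespace Ty

/-- Shifting of de Bruijn type variables ≥ k. -/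
def lift : ℕ → Ty → Ty
  | k, tvar i => if i < k then tvar i else tvar (i + 1)
  | _, nat => nat
  | k, list A => list (lift k A)
  | k, arrow A B => arrow (lift k A) (lift k B)
  | k, all A => all (lift (k + 1) A)
  | k, union A Δ => union (lift k A) Δ
  | k, corrupt Δ A => corrupt Δ (lift k A)

/-- Substitution `A[k := B]` on types (de Bruijn). -/
def subst : ℕ → Ty → Ty → Ty
  | k, B, tvar i => if i = k then B else if k < i then tvar (i - 1) else tvar i
  | _, _, nat => nat
  | k, B, list A => list (subst k B A)
  | k, B, arrow A C => arrow (subst k B A) (subst k B C)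
  | k, B, all A => all (subst (k + 1) (lift 0 B) A)
  | k, B, union A Δ => union (subst k B A) Δ
  | k, B, corrupt Δ A => corrupt Δ (subst k B A)

end Ty

open Ty

/-- The subtyping relation ⊑ of Fx. -/
inductive Subty : Ty → Ty → Prop
  | refl (A) : Subty A A
  | trans {A B C} : Subty A B → Subty B C → Subty A C
  | arrow {A A' B B'} : Subty A' A → Subty B B' → Subty (arrow A B) (arrow A' B')
  | gen {A B} : Subty (Ty.lift 0 A) B → Subty A (all B)
  | inst (A B) : Subty (all A) (Ty.subst 0 B A)
  | distr (A B) : Subty (all (arrow (Ty.lift 0 A) B)) (arrow A (all B))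
  | uni (A Δ) : Subty A (union A Δ)
  | corrupt (A Δ) : Subty (union A Δ) (corrupt Δ A)
  | noexc (A) : Subty (corrupt ∅ A) A
  | uctx {A B} (Δ) : Subty A B → Subty (union A Δ) (union B Δ)
  | arru (A B Δ) : Subty (union (arrow A B) Δ) (arrow A (union B Δ))
  | fallc (A Δ) : Subty (all (corrupt Δ A)) (corrupt Δ (all A))
  | fallu (A Δ) : Subty (all (union A Δ)) (union (all A) Δ)
  | lcor (A Δ) : Subty (list (corrupt Δ A)) (corrupt Δ (list A))
  | lctx {A B} : Subty A B → Subty (list A) (list B)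
  | uuL (A Δ Δ') : Subty (union (union A Δ) Δ') (union A (Δ ∪ Δ'))
  | uuR (A Δ Δ') : Subty (union A (Δ ∪ Δ')) (union (union A Δ) Δ')
  | ccL (A Δ Δ') : Subty (corrupt Δ' (corrupt Δ A)) (corrupt (Δ ∪ Δ') A)
  | ccR (A Δ Δ') : Subty (corrupt (Δ ∪ Δ') A) (corrupt Δ' (corrupt Δ A))
  | ucL (A Δ Δ') : Subty (corrupt Δ' (union A Δ)) (union (corrupt Δ' A) Δ)
  | ucR (A Δ Δ') : Subty (union (corrupt Δ' A) Δ) (corrupt Δ' (union A Δ))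
  | arrcL (A B Δ) : Subty (corrupt Δ (arrow A B)) (arrow (corrupt Δ A) (corrupt Δ B))
  | arrcR (A B Δ) : Subty (arrow (corrupt Δ A) (corrupt Δ B)) (corrupt Δ (arrow A B))

open Ty

/-- Type scheme of the recursion operator `natrec` (`α` is `tvar 0`). -/
def recTy (Δ Δ' : Finset ExnName) : Ty :=
  Ty.all (Ty.arrow (Ty.union (tvar 0) Δ)
    (Ty.arrow (Ty.arrow (Ty.corrupt Δ Ty.nat)
        (Ty.arrow (Ty.union (tvar 0) Δ) (Ty.union (tvar 0) Δ)))
      (Ty.arrow (Ty.union (Ty.corrupt Δ Ty.nat) Δ')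
        (Ty.union (tvar 0) (Δ ∪ Δ')))))

/-- Type scheme of `foldright` (`α` is `tvar 1`, `β` is `tvar 0`). -/
def foldTy (Δ Δ' : Finset ExnName) : Ty :=
  Ty.all (Ty.all (Ty.arrow (Ty.union (tvar 1) Δ)
    (Ty.arrow (Ty.arrow (Ty.corrupt Δ (tvar 0))
        (Ty.arrow (Ty.corrupt Δ (Ty.list (tvar 0)))
          (Ty.arrow (Ty.union (tvar 1) Δ) (Ty.union (tvar 1) Δ))))
      (Ty.arrow (Ty.union (Ty.corrupt Δ (Ty.list (tvar 0))) Δ')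
        (Ty.union (tvar 1) (Δ ∪ Δ'))))))

/-- The typing judgment `Γ ⊢ M : A` of Fx (contexts are lists of types,
de Bruijn style; the `gen` rule shifts the type variables of the context,
which expresses `α ∉ FV(Γ)`). -/
inductive HasTy : List Ty → Tm → Ty → Prop
  | ax {Γ x A} : Γ[x]? = some A → HasTy Γ (Tm.var x) A
  | abs {Γ M A B} : HasTy (A :: Γ) M B → HasTy Γ (Tm.lam M) (Ty.arrow A B)
  | app {Γ M N A B} : HasTy Γ M (Ty.arrow A B) → HasTy Γ N A → HasTy Γ (Tm.app M N) B
  | gen {Γ M A} : HasTy (Γ.map (Ty.lift 0)) M A → HasTy Γ M (Ty.all A)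
  | subs {Γ M A B} : HasTy Γ M A → Subty A B → HasTy Γ M B
  | zero {Γ} : HasTy Γ Tm.zero Ty.nat
  | succ {Γ} : HasTy Γ Tm.succ (Ty.arrow Ty.nat Ty.nat)
  | natrec {Γ} (Δ Δ' : Finset ExnName) : HasTy Γ Tm.natrec (recTy Δ Δ')
  | nil {Γ} : HasTy Γ Tm.nil (Ty.all (Ty.list (tvar 0)))
  | cons {Γ} : HasTy Γ Tm.cons
      (Ty.all (Ty.arrow (tvar 0) (Ty.arrow (Ty.list (tvar 0)) (Ty.list (tvar 0)))))
  | foldr {Γ} (Δ Δ' : Finset ExnName) : HasTy Γ Tm.foldr (foldTy Δ Δ')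
  | raise {Γ} (e : ExnName) : HasTy Γ (Tm.raise e) (Ty.all (Ty.union (tvar 0) {e}))
  | tryc {Γ M N A} (e : ExnName) : HasTy Γ M (Ty.union A {e}) → HasTy Γ N A →
      HasTy Γ (Tm.tryc M e N) A

/-! Only `app`, `gen` and `subs` can end a derivation of `Γ ⊢ M N : A`. A final `subs` is pushed
into the codomain of the type of `M`; a final `gen` is pushed into both premises, using that
`∀α.(C → A) ⊑ ∀α.C → ∀α.A`, which follows from instantiating `α` by itself and distributing. -/

theorem Ty.subst_tvar_lift_succ (X : Ty) (k : ℕ) : Ty.subst k (tvar k) (Ty.lift (k + 1) X) = X := by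
  induction X generalizing k with
  | tvar i =>
    simp only [Ty.lift]
    split_ifs <;> simp only [Ty.subst] <;> split_ifs <;> grind
  | all A ih => simp only [Ty.lift, Ty.subst, if_neg (Nat.not_lt_zero k), ih]
  | _ => simp_all [Ty.lift, Ty.subst]

theorem Subty.lift_all (X : Ty) : Subty (Ty.lift 0 (Ty.all X)) X := by
  simpa [Ty.lift, Ty.subst_tvar_lift_succ] using Subty.inst (Ty.lift 1 X) (tvar 0)

theorem Subty.all_arrow (C A : Ty) :
    Subty (Ty.all (Ty.arrow C A)) (Ty.arrow (Ty.all C) (Ty.all A)) :=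
  .trans (.gen (.trans (.lift_all _) (.arrow (.lift_all C) (.refl A)))) (.distr (Ty.all C) A)

/-- Inversion of application typing. -/
theorem app_typing_inversion {Γ : List Ty} {M N : Tm} {A : Ty}
    (h : HasTy Γ (Tm.app M N) A) :
    ∃ C : Ty, HasTy Γ M (Ty.arrow C A) ∧ HasTy Γ N C := by
  generalize hP : Tm.app M N = P at h
  induction h generalizing M N with
  | app hM hN =>
    cases hP
    exact ⟨_, hM, hN⟩
  | gen _ ih =>
    obtain ⟨C, hM, hN⟩ := ih hP
    exact ⟨Ty.all C, hM.gen.subs (Subty.all_arrow C _), hN.gen⟩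
  | subs _ hsub ih =>
    obtain ⟨C, hM, hN⟩ := ih hP
    exact ⟨C, hM.subs (.arrow (.refl C) hsub), hN⟩
  | _ => cases hP
end

section
/- Inversion of try typing in Fx: if Γ ⊢ (try M with ε ↦ N) : A, then Γ ⊢ M : A∪{ε} and Γ ⊢ N : A. -/
open Tm

open Ty

open Ty

/-- Inversion of try typing. -/
theorem try_typing_inversion {Γ : List Ty} {M N : Tm} {e : ExnName} {A : Ty}
    (h : HasTy Γ (Tm.tryc M e N) A) :
    HasTy Γ M (Ty.union A {e}) ∧ HasTy Γ N A := by
  generalize hP : Tm.tryc M e N = P at h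
  induction h generalizing M N e with
  | tryc _ hM hN => cases hP; exact ⟨hM, hN⟩
  | subs _ hAB ih =>
    obtain ⟨hM, hN⟩ := ih hP
    exact ⟨hM.subs (Subty.uctx _ hAB), hN.subs hAB⟩
  | gen _ ih =>
    obtain ⟨hM, hN⟩ := ih hP
    exact ⟨(HasTy.gen hM).subs (Subty.fallu _ _), HasTy.gen hN⟩
  | _ => cases hP
end
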